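/- arXiv:2310.07474 — 2 statements merged into one kernel-verified Lean document; each statement's English description precedes it below -/
import Mathlib

section
/- A left skew brace B is centrally nilpotent if and only if every countable subbrace of B is centrally nilpotent. -/
universe u

/-- A left skew brace: a set with two group structures `(B,+)` and `(B,·)` sharing the
same identity element, satisfying `a·(b+c) = a·b - a + a·c`. -/
class SkewBrace (B : Type u) extends AddGroup B, Group B where
  zero_eq_one : (0 : B) = 1
  skew_distrib : ∀ a b c : B, a * (b + c) = a * b + (-a + a * c)

namespace SkewBrace

variable {B : Type u} [SkewBrace B]

/-- The star product `a ∗ b = -a + a·b - b`. -/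
def sbStar (a b : B) : B := -a + a * b + -b

/-- The additive commutator `[a,b]₊ = -a - b + a + b`. -/
def addCommutator (a b : B) : B := -a + -b + a + b

/-- The multiplicative commutator `[a,b]· = a⁻¹b⁻¹ab`. -/
def mulCommutator (a b : B) : B := a⁻¹ * b⁻¹ * a * b

/-- A subbrace: a subset that is a subgroup of both `(B,+)` and `(B,·)`. -/
structure IsSubbrace (S : Set B) : Prop where
  zero_mem : (0 : B) ∈ S
  add_mem : ∀ ⦃a b : B⦄, a ∈ S → b ∈ S → a + b ∈ S
  neg_mem : ∀ ⦃a : B⦄, a ∈ S → -a ∈ S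
  mul_mem : ∀ ⦃a b : B⦄, a ∈ S → b ∈ S → a * b ∈ S
  inv_mem : ∀ ⦃a : B⦄, a ∈ S → a⁻¹ ∈ S

/-- `J` is an ideal of the subbrace `S`: a subbrace of `S`, normal in `(S,+)` and
`(S,·)`, with `S ∗ J ⊆ J` and `J ∗ S ⊆ J`. -/
structure IsIdealIn (S J : Set B) : Prop where
  subset : J ⊆ S
  isSubbrace : IsSubbrace J
  add_conj_mem : ∀ ⦃b : B⦄, b ∈ S → ∀ ⦃a : B⦄, a ∈ J → b + a + -b ∈ J
  mul_conj_mem : ∀ ⦃b : B⦄, b ∈ S → ∀ ⦃a : B⦄, a ∈ J → b * a * b⁻¹ ∈ J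
  star_mem_left : ∀ ⦃b : B⦄, b ∈ S → ∀ ⦃a : B⦄, a ∈ J → sbStar b a ∈ J
  star_mem_right : ∀ ⦃a : B⦄, a ∈ J → ∀ ⦃b : B⦄, b ∈ S → sbStar a b ∈ J

/-- An ideal of the brace `B`. -/
def IsIdeal (J : Set B) : Prop := IsIdealIn (Set.univ : Set B) J

/-- A left ideal: a subbrace `L` with `B ∗ L ⊆ L`. -/
structure IsLeftIdeal (L : Set B) : Prop where
  isSubbrace : IsSubbrace L
  star_mem_left : ∀ (b : B), ∀ ⦃a : B⦄, a ∈ L → sbStar b a ∈ L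

/-- The ideal of `B` generated by a subset `E`. -/
def idealClosure (E : Set B) : Set B := ⋂₀ {I : Set B | IsIdeal I ∧ E ⊆ I}

/-- The subbrace of `B` generated by a subset `E`. -/
def subbraceClosure (E : Set B) : Set B := ⋂₀ {S : Set B | IsSubbrace S ∧ E ⊆ S}

/-- The set `X_{I,J} = [I,J]₊ ∪ [I,J]· ∪ {i·j - (i+j) : i ∈ I, j ∈ J}`. -/
def commSet (I J : Set B) : Set B :=
  (AddSubgroup.closure {x : B | ∃ i ∈ I, ∃ j ∈ J, x = addCommutator i j} : Set B) ∪
    (Subgroup.closure {x : B | ∃ i ∈ I, ∃ j ∈ J, x = mulCommutator i j} : Set B) ∪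
    {x : B | ∃ i ∈ I, ∃ j ∈ J, x = i * j + -(i + j)}

/-- The commutator ideal `[I,J]^B`: the ideal of `B` generated by `X_{I,J}`. -/
def commIdeal (I J : Set B) : Set B := idealClosure (commSet I J)

/-- The set `X ∗ Y = {x ∗ y : x ∈ X, y ∈ Y}`. -/
def starSet (X Y : Set B) : Set B := {z : B | ∃ x ∈ X, ∃ y ∈ Y, z = sbStar x y}

/-- The centre of the subbrace `S`. -/
def centreIn (S : Set B) : Set B :=
  {a ∈ S | ∀ b ∈ S, a + b = b + a ∧ a + b = a * b ∧ a + b = b * a}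

/-- The centre `ζ(B)` of the brace `B`. -/
def centre (B : Type u) [SkewBrace B] : Set B := centreIn (Set.univ : Set B)

/-- For ideals `J ≤ I` of the subbrace `S`: `I/J` is a central factor of `S`,
i.e. `I/J ≤ ζ(S/J)`. -/
def IsCentralFactorIn (S J I : Set B) : Prop :=
  ∀ ⦃a : B⦄, a ∈ I → ∀ ⦃b : B⦄, b ∈ S →
    -(a + b) + (b + a) ∈ J ∧ -(a + b) + a * b ∈ J ∧ -(a + b) + b * a ∈ J

/-- The subbrace `S` is centrally nilpotent of class at most `n`: there is a chain of
ideals `0 = I₀ ≤ I₁ ≤ … ≤ Iₙ = S` of `S` with `I_{k+1}/I_k ≤ ζ(S/I_k)`. -/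
def CentrallyNilpotentInOfClassLE (S : Set B) (n : ℕ) : Prop :=
  ∃ I : ℕ → Set B, I 0 = {0} ∧ I n = S ∧
    (∀ k ≤ n, IsIdealIn S (I k)) ∧
    (∀ k < n, I k ⊆ I (k + 1)) ∧
    (∀ k < n, IsCentralFactorIn S (I k) (I (k + 1)))

/-- The subbrace `S` is centrally nilpotent. -/
def CentrallyNilpotentIn (S : Set B) : Prop := ∃ n : ℕ, CentrallyNilpotentInOfClassLE S n

/-- The brace `B` is centrally nilpotent. -/
def CentrallyNilpotent (B : Type u) [SkewBrace B] : Prop :=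
  CentrallyNilpotentIn (Set.univ : Set B)

/-- The brace `B` is locally centrally-nilpotent: every finitely generated subbrace is
centrally nilpotent. -/
def LocallyCentrallyNilpotent (B : Type u) [SkewBrace B] : Prop :=
  ∀ E : Finset B, CentrallyNilpotentIn (subbraceClosure (E : Set B))

/-- The (finite) upper central series of `B`: `ζ₀(B) = 0` and
`ζ_{n+1}(B)/ζ_n(B) = ζ(B/ζ_n(B))`. -/
def zetaNat (B : Type u) [SkewBrace B] : ℕ → Set B
  | 0 => {0}
  | n + 1 =>
    {a : B | ∀ b : B, -(a + b) + (b + a) ∈ zetaNat B n ∧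
      -(a + b) + a * b ∈ zetaNat B n ∧ -(a + b) + b * a ∈ zetaNat B n}

/-- The transfinite upper central series of `B`. -/
noncomputable def zetaOrd (B : Type u) [SkewBrace B] (o : Ordinal.{u}) : Set B :=
  Ordinal.limitRecOn o ({0} : Set B)
    (fun _ Z =>
      {a : B | ∀ b : B, -(a + b) + (b + a) ∈ Z ∧ -(a + b) + a * b ∈ Z ∧ -(a + b) + b * a ∈ Z})
    (fun o _ ih => ⋃ (β : {β : Ordinal.{u} // β < o}), ih β.1 β.2)

/-- The brace `B` is hypercentral: the upper central series reaches `B`. -/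
def Hypercentral (B : Type u) [SkewBrace B] : Prop :=
  ∃ o : Ordinal.{u}, zetaOrd B o = Set.univ

/-- The largest ideal of `B` contained in `C`. -/
def idealCore (C : Set B) : Set B := ⋃₀ {I : Set B | IsIdeal I ∧ I ⊆ C}

/-- The lower `B`-central series of an ideal `I`:
`lowerCentralB I n = Γ_{n+1}(I)^B`, so `Γ₁(I)^B = I` and `Γ_{n+1}(I)^B = [Γ_n(I)^B, I]^B`. -/
def lowerCentralB (I : Set B) : ℕ → Set B
  | 0 => I
  | n + 1 => commIdeal (lowerCentralB I n) I

/-- `I` is a `B`-centrally nilpotent ideal. -/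
def BCentrallyNilpotent (I : Set B) : Prop := ∃ n : ℕ, lowerCentralB I n = {0}

/-- The derived series of an ideal with respect to `B`. -/
def derivedB (I : Set B) : ℕ → Set B
  | 0 => I
  | n + 1 => commIdeal (derivedB I n) (derivedB I n)

/-- The preimages in `B` of the derived series of `I/F` with respect to `B/F`. -/
def derivedModB (F I : Set B) : ℕ → Set B
  | 0 => I
  | n + 1 => idealClosure (commSet (derivedModB F I n) (derivedModB F I n) ∪ F)

/-- The Fitting ideal of `B`: the ideal generated by all `B`-centrally nilpotent ideals. -/
def FitIdeal (B : Type u) [SkewBrace B] : Set B :=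
  idealClosure (⋃₀ {I : Set B | IsIdeal I ∧ BCentrallyNilpotent I})

/-- The centraliser of an ideal `I`: the largest ideal `C` with `[C,I]^B = 0`. -/
def idealCentraliser (I : Set B) : Set B :=
  ⋃₀ {C : Set B | IsIdeal C ∧ commIdeal C I ⊆ {0}}

/-- The centraliser of a chief factor `Itop/Ibot`: the largest ideal `C` of `B` with
`[C, Itop]^B ≤ Ibot`. -/
def factorCentraliser (Itop Ibot : Set B) : Set B :=
  ⋃₀ {C : Set B | IsIdeal C ∧ commIdeal C Itop ⊆ Ibot}

/-- A maximal left ideal of `B`. -/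
def IsMaximalLeftIdeal (L : Set B) : Prop :=
  IsLeftIdeal L ∧ L ≠ Set.univ ∧
    ∀ L' : Set B, IsLeftIdeal L' → L ⊆ L' → L' = L ∨ L' = Set.univ

/-- The Frattini ideal of `B`. -/
def FratIdeal (B : Type u) [SkewBrace B] : Set B :=
  (⋂₀ {L : Set B | IsMaximalLeftIdeal L}) ∩ FitIdeal B

/-- The additive torsion set `T₊(B)`. -/
def addTorsion (B : Type u) [SkewBrace B] : Set B := {a : B | ∃ n : ℕ, 0 < n ∧ n • a = 0}

/-- The multiplicative torsion set `T·(B)`. -/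
def mulTorsion (B : Type u) [SkewBrace B] : Set B := {a : B | ∃ n : ℕ, 0 < n ∧ a ^ n = 1}

/-- The order of an element of a brace: the cardinality of the subbrace it generates
(`0` if infinite). -/
noncomputable def elemOrder (a : B) : ℕ := Nat.card ↥(subbraceClosure ({a} : Set B))

/-- `a` is a `π`-element: it is periodic and its order is a `π`-number. -/
def IsPiElement (π : Set ℕ) (a : B) : Prop :=
  0 < elemOrder a ∧ ∀ p : ℕ, p.Prime → p ∣ elemOrder a → p ∈ π

/-- The order of the coset `a + J` in the quotient brace modulo the ideal `J`:
the number of cosets of `J` in the subbrace generated by `a` together with `J`. -/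
noncomputable def elemOrderMod (J : Set B) (a : B) : ℕ :=
  Nat.card ↥((fun x : B => {y : B | -x + y ∈ J}) '' subbraceClosure ({a} ∪ J))

/-- The coset of `a` modulo the ideal `J` is a `π`-element of the quotient brace. -/
def IsPiElementMod (π : Set ℕ) (J : Set B) (a : B) : Prop :=
  0 < elemOrderMod J a ∧ ∀ p : ℕ, p.Prime → p ∣ elemOrderMod J a → p ∈ π

/-- A subideal: a finite chain `S = C₀ ⊴ C₁ ⊴ … ⊴ Cₙ = B`. -/
def IsSubideal (S : Set B) : Prop :=
  ∃ (n : ℕ) (C : ℕ → Set B), C 0 = S ∧ C n = Set.univ ∧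
    (∀ k ≤ n, IsSubbrace (C k)) ∧ ∀ k < n, IsIdealIn (C (k + 1)) (C k)

/-- An ascendant subbrace: an ordinal-indexed ascending chain from `S` to `B`. -/
def IsAscendant (S : Set B) : Prop :=
  ∃ (l : Ordinal.{u}) (C : Ordinal.{u} → Set B), C 0 = S ∧ C l = Set.univ ∧
    (∀ α ≤ l, IsSubbrace (C α)) ∧
    (∀ α < l, IsIdealIn (C (α + 1)) (C α)) ∧
    ∀ μ ≤ l, Order.IsSuccLimit μ → C μ = ⋃ β < μ, C β

/-- A serial subbrace: there is a complete chain of subbraces containing `S` and `B`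
in which each member is an ideal of its immediate successor. -/
def IsSerial (S : Set B) : Prop :=
  ∃ 𝒞 : Set (Set B), S ∈ 𝒞 ∧ Set.univ ∈ 𝒞 ∧
    (∀ D ∈ 𝒞, IsSubbrace D) ∧
    (∀ D ∈ 𝒞, ∀ E ∈ 𝒞, D ⊆ E ∨ E ⊆ D) ∧
    (∀ 𝒟 ⊆ 𝒞, 𝒟.Nonempty → ⋃₀ 𝒟 ∈ 𝒞 ∧ ⋂₀ 𝒟 ∈ 𝒞) ∧
    ∀ D ∈ 𝒞, ∀ E ∈ 𝒞, D ⊂ E → (∀ F ∈ 𝒞, ¬(D ⊂ F ∧ F ⊂ E)) → IsIdealIn E D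

/-- `S` is a maximal `p`-subgroup of `(B,+)`. -/
def IsMaxAddPSubgroup (p : ℕ) (S : AddSubgroup B) : Prop :=
  (∀ a ∈ S, ∃ k : ℕ, p ^ k • a = 0) ∧
    ∀ T : AddSubgroup B, (∀ a ∈ T, ∃ k : ℕ, p ^ k • a = 0) → S ≤ T → T = S

/-- `S` is a maximal `p`-subgroup of `(B,·)`. -/
def IsMaxMulPSubgroup (p : ℕ) (S : Subgroup B) : Prop :=
  (∀ a ∈ S, ∃ k : ℕ, a ^ p ^ k = 1) ∧
    ∀ T : Subgroup B, (∀ a ∈ T, ∃ k : ℕ, a ^ p ^ k = 1) → S ≤ T → T = S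

/-- Formal 2-polynomials of a brace: terms in two variables built from `+`, `-`, `·`,
inverse and the constant `0`. -/
inductive Poly2 : Type
  | X : Poly2
  | Y : Poly2
  | zero : Poly2
  | add : Poly2 → Poly2 → Poly2
  | neg : Poly2 → Poly2
  | mul : Poly2 → Poly2 → Poly2
  | inv : Poly2 → Poly2

/-- Evaluation of a formal 2-polynomial in a brace. -/
def Poly2.eval : Poly2 → B → B → B
  | .X, a, _ => a
  | .Y, _, b => b
  | .zero, _, _ => 0
  | .add p q, a, b => p.eval a b + q.eval a b
  | .neg p, a, b => -(p.eval a b)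
  | .mul p q, a, b => p.eval a b * q.eval a b
  | .inv p, a, b => (p.eval a b)⁻¹

/-- A 2-polynomial is absorbing if it vanishes whenever one variable is `0`. -/
def Poly2.Absorbing (p : Poly2) (B : Type u) [SkewBrace B] : Prop :=
  (∀ x : B, p.eval x (0 : B) = 0) ∧ ∀ y : B, p.eval (0 : B) y = 0

end SkewBrace

open SkewBrace
namespace CNAux

open SkewBrace

variable {B : Type u} [SkewBrace B]

lemma zero_mul' (b : B) : (0 : B) * b = b := by rw [zero_eq_one, one_mul]
lemma mul_zero' (b : B) : b * (0 : B) = b := by rw [zero_eq_one, mul_one]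
lemma inv_zero' : ((0 : B)⁻¹ : B) = 0 := by rw [zero_eq_one, inv_one]

/-- Relative upper central series. -/
def zetaIn' (S : Set B) : ℕ → Set B
  | 0 => {0}
  | n + 1 => {a ∈ S | ∀ b ∈ S,
      -(a + b) + (b + a) ∈ zetaIn' S n ∧ -(a + b) + a * b ∈ zetaIn' S n ∧
      -(a + b) + b * a ∈ zetaIn' S n}

lemma mem_zetaIn'_succ {S : Set B} {a : B} {n : ℕ} :
    a ∈ zetaIn' S (n + 1) ↔ a ∈ S ∧ ∀ b ∈ S,
      -(a + b) + (b + a) ∈ zetaIn' S n ∧ -(a + b) + a * b ∈ zetaIn' S n ∧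
      -(a + b) + b * a ∈ zetaIn' S n := by
  simp [zetaIn', Set.mem_setOf_eq]

lemma mem_zeta_univ_succ {a : B} {n : ℕ} :
    a ∈ zetaIn' (Set.univ : Set B) (n + 1) ↔ ∀ b : B,
      -(a + b) + (b + a) ∈ zetaIn' (Set.univ : Set B) n ∧
      -(a + b) + a * b ∈ zetaIn' (Set.univ : Set B) n ∧
      -(a + b) + b * a ∈ zetaIn' (Set.univ : Set B) n := by
  simp [mem_zetaIn'_succ]

section Cong

variable {J : Set B} (hJ : IsIdealIn (Set.univ : Set B) J)

/-- Congruence modulo the ideal `J`. -/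
def R (J : Set B) (x y : B) : Prop := -x + y ∈ J

lemma Rdef {x y : B} : R J x y ↔ -x + y ∈ J := Iff.rfl

include hJ

lemma Rrefl (x : B) : R J x x := by
  simp [R, hJ.isSubbrace.zero_mem]

lemma Rsymm {x y : B} (h : R J x y) : R J y x := by
  have := hJ.isSubbrace.neg_mem h
  simpa [R, neg_add_rev] using this

lemma Rtrans {x y z : B} (h1 : R J x y) (h2 : R J y z) : R J x z := by
  have := hJ.isSubbrace.add_mem h1 h2
  simpa [R, add_assoc] using this

lemma Radd {x x' y y' : B} (h1 : R J x x') (h2 : R J y y') : R J (x + y) (x' + y') := by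
  have c := hJ.add_conj_mem (Set.mem_univ (-y)) h1
  have := hJ.isSubbrace.add_mem c h2
  simpa [R, neg_add_rev, add_assoc] using this

lemma Rneg {x y : B} (h : R J x y) : R J (-x) (-y) := by
  have := hJ.add_conj_mem (Set.mem_univ y) (Rsymm hJ h)
  simpa [R, neg_add_rev, add_assoc] using this

lemma Rmul_iff {x y : B} : R J x y ↔ x⁻¹ * y ∈ J := by
  constructor
  · intro h
    have hs := hJ.star_mem_left (Set.mem_univ x⁻¹) h
    have e : x⁻¹ * y = sbStar x⁻¹ (-x + y) + (-x + y) := by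
      conv_lhs => rw [show y = x + (-x + y) from (add_neg_cancel_left x y).symm]
      rw [skew_distrib, inv_mul_cancel, ← zero_eq_one, zero_add, sbStar]
      simp [add_assoc]
    rw [e]; exact hJ.isSubbrace.add_mem hs h
  · intro h
    have hs := hJ.star_mem_left (Set.mem_univ x) h
    have e : -x + y = sbStar x (x⁻¹ * y) + (x⁻¹ * y) := by
      conv_lhs => rw [show y = x * (x⁻¹ * y) from (mul_inv_cancel_left x y).symm]
      simp [sbStar, add_assoc]
    rw [R, e]; exact hJ.isSubbrace.add_mem hs h

lemma Rmul {x x' y y' : B} (h1 : R J x x') (h2 : R J y y') : R J (x * y) (x' * y') := by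
  rw [Rmul_iff hJ] at h1 h2 ⊢
  have c := hJ.mul_conj_mem (Set.mem_univ y⁻¹) h1
  have := hJ.isSubbrace.mul_mem c h2
  have e : y⁻¹ * (x⁻¹ * x') * y⁻¹⁻¹ * (y⁻¹ * y') = (x * y)⁻¹ * (x' * y') := by group
  rwa [e] at this

lemma Rcancel {a x y : B} (h : R J (a * x) (a * y)) : R J x y := by
  rw [Rmul_iff hJ] at h ⊢
  have e : (a * x)⁻¹ * (a * y) = x⁻¹ * y := by group
  rwa [e] at h

lemma RaddJ {j x y : B} (hj : j ∈ J) (h : R J x y) : R J x (j + y) := by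
  have c := hJ.add_conj_mem (Set.mem_univ (-x)) hj
  have := hJ.isSubbrace.add_mem c h
  simpa [R, add_assoc] using this

end Cong

/-- `a` is central modulo `J`. -/
def Cen (J : Set B) (a : B) : Prop :=
  ∀ b : B, -(a + b) + (b + a) ∈ J ∧ -(a + b) + a * b ∈ J ∧ -(a + b) + b * a ∈ J

section CenLemmas

variable {J : Set B} (hJ : IsIdealIn (Set.univ : Set B) J) {a a' : B}

lemma cen_h1 (ha : Cen J a) (b : B) : R J (a + b) (b + a) := (ha b).1
lemma cen_h2 (ha : Cen J a) (b : B) : R J (a + b) (a * b) := (ha b).2.1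
lemma cen_h3 (ha : Cen J a) (b : B) : R J (a + b) (b * a) := (ha b).2.2

include hJ

lemma cen_negcomm (ha : Cen J a) (b : B) : R J (-a + b) (b + -a) := by
  have t := Radd hJ (Radd hJ (Rrefl hJ (-a)) (Rsymm hJ (cen_h1 ha b))) (Rrefl hJ (-a))
  simpa [add_assoc] using t

lemma cen_haJ (ha : Cen J a) : a * -a ∈ J := by
  simpa [R] using cen_h2 ha (-a)

lemma cen_hinv (ha : Cen J a) : R J (-a) a⁻¹ := by
  refine Rsymm hJ ((Rmul_iff hJ).2 ?_)
  simpa using cen_haJ hJ ha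

lemma cen_negmulL (ha : Cen J a) (b : B) : R J (-a * b) (-a + b) := by
  refine Rtrans hJ (Rmul hJ (cen_hinv hJ ha) (Rrefl hJ b)) ?_
  refine Rcancel hJ (a := a) ?_
  rw [mul_inv_cancel_left]
  rw [skew_distrib a (-a) b]
  refine RaddJ hJ (cen_haJ hJ ha) ?_
  have := cen_h2 ha b
  simpa [R, neg_add_rev, add_assoc] using this

lemma cen_negmulR (ha : Cen J a) (b : B) : R J (b * -a) (-a + b) := by
  have e0 : b = b * -a + (-b + b * a) := by
    have := skew_distrib b (-a) a
    simpa [mul_zero'] using this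
  have e : b * -a = b + (-(b * a) + b) := by
    have := congrArg (· + -(-b + b * a)) e0
    simpa [add_assoc, neg_add_rev] using this.symm
  have t : R J (b * -a) (b + (-(a + b) + b)) := by
    rw [e]
    exact Radd hJ (Rrefl hJ b) (Radd hJ (Rneg hJ (Rsymm hJ (cen_h3 ha b))) (Rrefl hJ b))
  have e2 : b + (-(a + b) + b) = -a + b := by
    simp [neg_add_rev, add_assoc]
  rwa [e2] at t

lemma cen_closed (ha : Cen J a) {x : B} (hx : R J a x) : Cen J x := by
  intro b
  refine ⟨?_, ?_, ?_⟩
  · exact Rtrans hJ (Radd hJ (Rsymm hJ hx) (Rrefl hJ b))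
      (Rtrans hJ (cen_h1 ha b) (Radd hJ (Rrefl hJ b) hx))
  · exact Rtrans hJ (Radd hJ (Rsymm hJ hx) (Rrefl hJ b))
      (Rtrans hJ (cen_h2 ha b) (Rmul hJ hx (Rrefl hJ b)))
  · exact Rtrans hJ (Radd hJ (Rsymm hJ hx) (Rrefl hJ b))
      (Rtrans hJ (cen_h3 ha b) (Rmul hJ (Rrefl hJ b) hx))

lemma cen_zero : Cen J (0 : B) := by
  intro b
  refine ⟨?_, ?_, ?_⟩ <;> simp [zero_mul', mul_zero', hJ.isSubbrace.zero_mem]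

lemma cen_add (ha : Cen J a) (ha' : Cen J a') : Cen J (a + a') := by
  have c1 : ∀ b : B, R J (a + a' + b) (b + (a + a')) := by
    intro b
    rw [add_assoc]
    refine Rtrans hJ (Radd hJ (Rrefl hJ a) (cen_h1 ha' b)) ?_
    rw [← add_assoc, ← add_assoc]
    exact Radd hJ (cen_h1 ha b) (Rrefl hJ a')
  intro b
  refine ⟨c1 b, ?_, ?_⟩
  · rw [add_assoc]
    refine Rtrans hJ (cen_h2 ha (a' + b)) ?_
    refine Rtrans hJ (Rmul hJ (Rrefl hJ a) (cen_h2 ha' b)) ?_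
    rw [← mul_assoc]
    exact Rmul hJ (Rsymm hJ (cen_h2 ha a')) (Rrefl hJ b)
  · have that : R J (b * (a + a')) (b + (a + a')) := by
      rw [skew_distrib]
      have inner : R J (b * a') (b + a') :=
        Rtrans hJ (Rsymm hJ (cen_h3 ha' b)) (cen_h1 ha' b)
      refine Rtrans hJ (Radd hJ (Rsymm hJ (cen_h3 ha b)) (Radd hJ (Rrefl hJ (-b)) inner)) ?_
      rw [neg_add_cancel_left, ← add_assoc]
      exact Radd hJ (cen_h1 ha b) (Rrefl hJ a')
    exact Rtrans hJ (c1 b) (Rsymm hJ that)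

lemma cen_neg (ha : Cen J a) : Cen J (-a) := by
  intro b
  exact ⟨cen_negcomm hJ ha b, Rsymm hJ (cen_negmulL hJ ha b), Rsymm hJ (cen_negmulR hJ ha b)⟩

lemma cen_mul (ha : Cen J a) (ha' : Cen J a') : Cen J (a * a') :=
  cen_closed hJ (cen_add hJ ha ha') (cen_h2 ha a')

lemma cen_inv (ha : Cen J a) : Cen J a⁻¹ :=
  cen_closed hJ (cen_neg hJ ha) (cen_hinv hJ ha)

lemma cen_addconj (ha : Cen J a) (b : B) : Cen J (b + a + -b) := by
  refine cen_closed hJ ha ?_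
  have := hJ.isSubbrace.neg_mem (cen_h1 ha (-b))
  simpa [R, neg_add_rev, add_assoc] using this

lemma cen_mulconj (ha : Cen J a) (b : B) : Cen J (b * a * b⁻¹) := by
  refine cen_closed hJ ha ?_
  have s : R J (a * b) (b * a) := Rtrans hJ (Rsymm hJ (cen_h2 ha b)) (cen_h3 ha b)
  have t := Rmul hJ s (Rrefl hJ b⁻¹)
  rwa [mul_inv_cancel_right] at t

lemma cen_star_left (ha : Cen J a) (b : B) : sbStar b a ∈ J := by
  have s : R J (b + a) (b * a) := Rtrans hJ (Rsymm hJ (cen_h1 ha b)) (cen_h3 ha b)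
  have := hJ.add_conj_mem (Set.mem_univ a) (Rdef.1 s)
  have e : a + (-(b + a) + b * a) + -a = sbStar b a := by
    simp [sbStar, neg_add_rev, add_assoc]
  rwa [e] at this

lemma cen_star_right (ha : Cen J a) (b : B) : sbStar a b ∈ J := by
  have := hJ.add_conj_mem (Set.mem_univ b) (Rdef.1 (cen_h2 ha b))
  have e : b + (-(a + b) + a * b) + -b = sbStar a b := by
    simp [sbStar, neg_add_rev, add_assoc]
  rwa [e] at this

lemma cen_of_memJ {j : B} (hj : j ∈ J) : Cen J j := by
  refine cen_closed hJ (cen_zero hJ) ?_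
  simpa [R] using hj

end CenLemmas

end CNAux
namespace CNAux

open SkewBrace

variable {B : Type u} [SkewBrace B]

lemma zeta_ideal : ∀ n : ℕ, IsIdealIn (Set.univ : Set B) (zetaIn' (Set.univ : Set B) n) := by
  intro n
  induction n with
  | zero =>
    refine ⟨Set.subset_univ _, ⟨rfl, ?_, ?_, ?_, ?_⟩, ?_, ?_, ?_, ?_⟩
    · rintro a b rfl rfl; simp [zetaIn']
    · rintro a rfl; simp [zetaIn']
    · rintro a b rfl rfl; simp [zetaIn', zero_mul']
    · rintro a rfl; simp [zetaIn', inv_zero']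
    · rintro b _ a rfl; simp [zetaIn']
    · rintro b _ a rfl; simp [zetaIn', mul_zero', zero_eq_one]
    · rintro b _ a rfl; simp [zetaIn', sbStar, mul_zero', add_assoc]
    · rintro a rfl b _; simp [zetaIn', sbStar, zero_mul', add_assoc]
  | succ n ih =>
    have hmem : ∀ a : B, a ∈ zetaIn' (Set.univ : Set B) (n + 1) ↔
        Cen (zetaIn' (Set.univ : Set B) n) a := by
      intro a; rw [mem_zeta_univ_succ]; rfl
    refine ⟨Set.subset_univ _, ⟨?_, ?_, ?_, ?_, ?_⟩, ?_, ?_, ?_, ?_⟩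
    · exact (hmem 0).2 (cen_zero ih)
    · exact fun a b ha hb => (hmem _).2 (cen_add ih ((hmem a).1 ha) ((hmem b).1 hb))
    · exact fun a ha => (hmem _).2 (cen_neg ih ((hmem a).1 ha))
    · exact fun a b ha hb => (hmem _).2 (cen_mul ih ((hmem a).1 ha) ((hmem b).1 hb))
    · exact fun a ha => (hmem _).2 (cen_inv ih ((hmem a).1 ha))
    · exact fun b _ a ha => (hmem _).2 (cen_addconj ih ((hmem a).1 ha) b)
    · exact fun b _ a ha => (hmem _).2 (cen_mulconj ih ((hmem a).1 ha) b)
    · exact fun b _ a ha => (hmem _).2 (cen_of_memJ ih (cen_star_left ih ((hmem a).1 ha) b))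
    · exact fun a ha b _ => (hmem _).2 (cen_of_memJ ih (cen_star_right ih ((hmem a).1 ha) b))

lemma zeta_mono : ∀ n : ℕ, zetaIn' (Set.univ : Set B) n ⊆ zetaIn' (Set.univ : Set B) (n + 1) := by
  intro n
  induction n with
  | zero =>
    intro a ha
    simp only [zetaIn', Set.mem_singleton_iff] at ha
    subst ha
    rw [mem_zeta_univ_succ]
    intro b
    refine ⟨?_, ?_, ?_⟩ <;> simp [zero_mul', mul_zero', zetaIn']
  | succ n ih =>
    intro a ha
    rw [mem_zeta_univ_succ] at ha ⊢
    exact fun b => ⟨ih (ha b).1, ih (ha b).2.1, ih (ha b).2.2⟩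

lemma zeta_central (k : ℕ) :
    IsCentralFactorIn (Set.univ : Set B) (zetaIn' (Set.univ : Set B) k)
      (zetaIn' (Set.univ : Set B) (k + 1)) := by
  intro a ha b _
  exact mem_zeta_univ_succ.1 ha b

/-- The witness-transfer lemma. -/
lemma witness : ∀ (n : ℕ) (a : B), a ∉ zetaIn' (Set.univ : Set B) n →
    ∃ L : List B, ∀ S : Set B, IsSubbrace S → a ∈ S → (∀ x ∈ L, x ∈ S) →
      a ∉ zetaIn' S n := by
  intro n
  induction n with
  | zero => exact fun a ha => ⟨[], fun S _ _ _ => ha⟩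
  | succ n ih =>
    intro a ha
    rw [mem_zeta_univ_succ] at ha
    push_neg at ha
    obtain ⟨b, hb0⟩ := ha
    have hb : -(a + b) + (b + a) ∉ zetaIn' (Set.univ : Set B) n ∨
        -(a + b) + a * b ∉ zetaIn' (Set.univ : Set B) n ∨
        -(a + b) + b * a ∉ zetaIn' (Set.univ : Set B) n := by tauto
    have key : ∃ c : B, c ∉ zetaIn' (Set.univ : Set B) n ∧
        ∀ S : Set B, IsSubbrace S → a ∈ S → b ∈ S →
          (c ∈ S ∧ (a ∈ zetaIn' S (n + 1) → c ∈ zetaIn' S n)) := by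
      rcases hb with h | h | h
      · exact ⟨-(a + b) + (b + a), h, fun S hS haS hbS =>
          ⟨hS.add_mem (hS.neg_mem (hS.add_mem haS hbS)) (hS.add_mem hbS haS),
           fun hm => ((mem_zetaIn'_succ.1 hm).2 b hbS).1⟩⟩
      · exact ⟨-(a + b) + a * b, h, fun S hS haS hbS =>
          ⟨hS.add_mem (hS.neg_mem (hS.add_mem haS hbS)) (hS.mul_mem haS hbS),
           fun hm => ((mem_zetaIn'_succ.1 hm).2 b hbS).2.1⟩⟩
      · exact ⟨-(a + b) + b * a, h, fun S hS haS hbS =>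
          ⟨hS.add_mem (hS.neg_mem (hS.add_mem haS hbS)) (hS.mul_mem hbS haS),
           fun hm => ((mem_zetaIn'_succ.1 hm).2 b hbS).2.2⟩⟩
    obtain ⟨c, hc, hcS⟩ := key
    obtain ⟨L, hL⟩ := ih c hc
    refine ⟨b :: L, fun S hS haS hLS hmem => ?_⟩
    have hbS : b ∈ S := hLS b List.mem_cons_self
    obtain ⟨hcmem, himp⟩ := hcS S hS haS hbS
    exact hL S hS hcmem (fun x hx => hLS x (List.mem_cons_of_mem b hx)) (himp hmem)

/-- A nilpotency chain is below the upper central series. -/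
lemma nilpotent_subset_zeta {S : Set B} {n : ℕ}
    (h : CentrallyNilpotentInOfClassLE S n) : S ⊆ zetaIn' S n := by
  obtain ⟨I, h0, hn, hid, _, hcent⟩ := h
  have key : ∀ k, k ≤ n → I k ⊆ zetaIn' S k := by
    intro k
    induction k with
    | zero => intro _; rw [h0]; exact fun x hx => hx
    | succ k ihk =>
      intro hk a ha
      rw [mem_zetaIn'_succ]
      refine ⟨(hid (k + 1) hk).subset ha, fun b hb => ?_⟩
      obtain ⟨u, v, w⟩ := hcent k (Nat.lt_of_succ_le hk) ha hb
      exact ⟨ihk (Nat.le_of_succ_le hk) u, ihk (Nat.le_of_succ_le hk) v,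
        ihk (Nat.le_of_succ_le hk) w⟩
  have := key n le_rfl
  rwa [hn] at this

/-- Monotonicity of nilpotency class under subbraces. -/
lemma classLE_mono {S T : Set B} (hT : IsSubbrace T) (hTS : T ⊆ S) {n : ℕ}
    (h : CentrallyNilpotentInOfClassLE S n) : CentrallyNilpotentInOfClassLE T n := by
  obtain ⟨I, h0, hn, hid, hmono, hcent⟩ := h
  refine ⟨fun k => I k ∩ T, ?_, ?_, ?_, ?_, ?_⟩
  · show I 0 ∩ T = {0}
    rw [h0]; ext x; simp only [Set.mem_inter_iff, Set.mem_singleton_iff]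
    exact ⟨fun hx => hx.1, fun hx => ⟨hx, hx ▸ hT.zero_mem⟩⟩
  · show I n ∩ T = T
    rw [hn]; exact Set.inter_eq_self_of_subset_right hTS
  · intro k hk
    obtain ⟨hsub, hSB, hac, hmc, hsl, hsr⟩ := hid k hk
    refine ⟨Set.inter_subset_right, ⟨⟨hSB.zero_mem, hT.zero_mem⟩,
        fun a b ha hb => ⟨hSB.add_mem ha.1 hb.1, hT.add_mem ha.2 hb.2⟩,
        fun a ha => ⟨hSB.neg_mem ha.1, hT.neg_mem ha.2⟩,
        fun a b ha hb => ⟨hSB.mul_mem ha.1 hb.1, hT.mul_mem ha.2 hb.2⟩,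
        fun a ha => ⟨hSB.inv_mem ha.1, hT.inv_mem ha.2⟩⟩, ?_, ?_, ?_, ?_⟩
    · exact fun b hb a ha => ⟨hac (hTS hb) ha.1,
        hT.add_mem (hT.add_mem hb ha.2) (hT.neg_mem hb)⟩
    · exact fun b hb a ha => ⟨hmc (hTS hb) ha.1,
        hT.mul_mem (hT.mul_mem hb ha.2) (hT.inv_mem hb)⟩
    · exact fun b hb a ha => ⟨hsl (hTS hb) ha.1,
        hT.add_mem (hT.add_mem (hT.neg_mem hb) (hT.mul_mem hb ha.2)) (hT.neg_mem ha.2)⟩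
    · exact fun a ha b hb => ⟨hsr ha.1 (hTS hb),
        hT.add_mem (hT.add_mem (hT.neg_mem ha.2) (hT.mul_mem ha.2 hb)) (hT.neg_mem hb)⟩
  · exact fun k hk x hx => ⟨hmono k hk hx.1, hx.2⟩
  · intro k hk a ha b hb
    obtain ⟨u, v, w⟩ := hcent k hk ha.1 (hTS hb)
    exact ⟨⟨u, hT.add_mem (hT.neg_mem (hT.add_mem ha.2 hb)) (hT.add_mem hb ha.2)⟩,
      ⟨v, hT.add_mem (hT.neg_mem (hT.add_mem ha.2 hb)) (hT.mul_mem ha.2 hb)⟩,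
      ⟨w, hT.add_mem (hT.neg_mem (hT.add_mem ha.2 hb)) (hT.mul_mem hb ha.2)⟩⟩

end CNAux
namespace CNAux

open SkewBrace

variable {B : Type u} [SkewBrace B]

lemma subbraceClosure_isSubbrace (E : Set B) : IsSubbrace (subbraceClosure E) := by
  refine ⟨?_, ?_, ?_, ?_, ?_⟩
  · exact Set.mem_sInter.2 fun S hS => hS.1.zero_mem
  · exact fun a b ha hb => Set.mem_sInter.2 fun S hS =>
      hS.1.add_mem (Set.mem_sInter.1 ha S hS) (Set.mem_sInter.1 hb S hS)
  · exact fun a ha => Set.mem_sInter.2 fun S hS => hS.1.neg_mem (Set.mem_sInter.1 ha S hS)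
  · exact fun a b ha hb => Set.mem_sInter.2 fun S hS =>
      hS.1.mul_mem (Set.mem_sInter.1 ha S hS) (Set.mem_sInter.1 hb S hS)
  · exact fun a ha => Set.mem_sInter.2 fun S hS => hS.1.inv_mem (Set.mem_sInter.1 ha S hS)

lemma subset_subbraceClosure (E : Set B) : E ⊆ subbraceClosure E :=
  fun _ hx => Set.mem_sInter.2 fun _ hS => hS.2 hx

lemma subbraceClosure_min {E S : Set B} (h1 : IsSubbrace S) (h2 : E ⊆ S) :
    subbraceClosure E ⊆ S := fun _ hx => Set.mem_sInter.1 hx S ⟨h1, h2⟩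

/-- Chain generating the subbrace closure. -/
def genChain (E : Set B) : ℕ → Set B
  | 0 => insert 0 E
  | n + 1 =>
    genChain E n ∪ Set.image2 (· + ·) (genChain E n) (genChain E n) ∪
      (Neg.neg '' genChain E n) ∪ Set.image2 (· * ·) (genChain E n) (genChain E n) ∪
      (Inv.inv '' genChain E n)

lemma genChain_le_succ (E : Set B) (n : ℕ) : genChain E n ⊆ genChain E (n + 1) := by
  intro x hx
  simp only [genChain]
  exact Or.inl (Or.inl (Or.inl (Or.inl hx)))

lemma genChain_mono (E : Set B) : Monotone (genChain E) :=
  monotone_nat_of_le_succ (genChain_le_succ E)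

lemma genChain_countable {E : Set B} (hE : E.Countable) (n : ℕ) : (genChain E n).Countable := by
  induction n with
  | zero => exact (hE.insert 0)
  | succ n ih =>
    exact ((((ih.union (ih.image2 ih _)).union (ih.image _)).union (ih.image2 ih _)).union
      (ih.image _))

lemma genChain_isSubbrace (E : Set B) : IsSubbrace (⋃ n, genChain E n) := by
  have two : ∀ a b : B, a ∈ ⋃ n, genChain E n → b ∈ ⋃ n, genChain E n →
      ∃ m : ℕ, a ∈ genChain E m ∧ b ∈ genChain E m := by
    intro a b ha hb
    obtain ⟨m, hm⟩ := Set.mem_iUnion.1 ha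
    obtain ⟨k, hk⟩ := Set.mem_iUnion.1 hb
    exact ⟨max m k, genChain_mono E (le_max_left m k) hm, genChain_mono E (le_max_right m k) hk⟩
  refine ⟨Set.mem_iUnion.2 ⟨0, Set.mem_insert 0 E⟩, ?_, ?_, ?_, ?_⟩
  · intro a b ha hb
    obtain ⟨m, hm1, hm2⟩ := two a b ha hb
    exact Set.mem_iUnion.2 ⟨m + 1, Or.inl (Or.inl (Or.inl (Or.inr (Set.mem_image2_of_mem hm1 hm2))))⟩
  · intro a ha
    obtain ⟨m, hm⟩ := Set.mem_iUnion.1 ha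
    exact Set.mem_iUnion.2 ⟨m + 1, Or.inl (Or.inl (Or.inr ⟨a, hm, rfl⟩))⟩
  · intro a b ha hb
    obtain ⟨m, hm1, hm2⟩ := two a b ha hb
    exact Set.mem_iUnion.2 ⟨m + 1, Or.inl (Or.inr (Set.mem_image2_of_mem hm1 hm2))⟩
  · intro a ha
    obtain ⟨m, hm⟩ := Set.mem_iUnion.1 ha
    exact Set.mem_iUnion.2 ⟨m + 1, Or.inr ⟨a, hm, rfl⟩⟩

lemma subbraceClosure_countable {E : Set B} (hE : E.Countable) :
    (subbraceClosure E).Countable := by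
  have hsub : subbraceClosure E ⊆ ⋃ n, genChain E n := by
    refine subbraceClosure_min (genChain_isSubbrace E) ?_
    intro x hx
    exact Set.mem_iUnion.2 ⟨0, Set.mem_insert_of_mem 0 hx⟩
  exact (Set.countable_iUnion (genChain_countable hE)).mono hsub

end CNAux

open CNAux in
/-- `B` is centrally nilpotent iff all its countable subbraces are. -/
theorem centrallyNilpotent_iff_countable {B : Type u} [SkewBrace B] :
    CentrallyNilpotent B ↔
      ∀ S : Set B, IsSubbrace S → S.Countable → CentrallyNilpotentIn S := by
  constructor
  · rintro ⟨n, hn⟩ S hS _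
    exact ⟨n, classLE_mono hS (Set.subset_univ S) hn⟩
  · intro h
    -- Step 1: a uniform bound on the class of countable subbraces.
    have step1 : ∃ n : ℕ, ∀ S : Set B, IsSubbrace S → S.Countable →
        CentrallyNilpotentInOfClassLE S n := by
      by_contra hcon
      push_neg at hcon
      choose f hsub hcnt hnot using hcon
      set T : Set B := subbraceClosure (⋃ n, f n) with hT
      have hTc : T.Countable := subbraceClosure_countable (Set.countable_iUnion hcnt)
      obtain ⟨m, hm⟩ := h T (subbraceClosure_isSubbrace _) hTc
      have hfm : f m ⊆ T :=
        (Set.subset_iUnion f m).trans (subset_subbraceClosure _)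
      exact hnot m (classLE_mono (hsub m) hfm hm)
    obtain ⟨n, hn⟩ := step1
    -- Step 2: zetaIn' univ n = univ.
    have step2 : zetaIn' (Set.univ : Set B) n = Set.univ := by
      ext a
      simp only [Set.mem_univ, iff_true]
      by_contra ha
      obtain ⟨L, hL⟩ := witness n a ha
      set S : Set B := subbraceClosure (insert a {x | x ∈ L}) with hS
      have hSsub : IsSubbrace S := subbraceClosure_isSubbrace _
      have hScnt : S.Countable :=
        subbraceClosure_countable ((L.finite_toSet.insert a).countable)
      have haS : a ∈ S := subset_subbraceClosure _ (Set.mem_insert a _)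
      have hLS : ∀ x ∈ L, x ∈ S := fun x hx =>
        subset_subbraceClosure _ (Set.mem_insert_of_mem a hx)
      have hza := nilpotent_subset_zeta (hn S hSsub hScnt) haS
      exact hL S hSsub haS hLS hza
    exact ⟨n, zetaIn' (Set.univ : Set B), rfl, step2, fun k _ => zeta_ideal k,
      fun k _ => zeta_mono k, fun k _ => zeta_central k⟩
end

section
/- Let B be a locally centrally-nilpotent left skew brace and let M be a maximal subbrace of B. Then M is an ideal of B, and the derived ideal ∂(B) = [B,B]^B is contained in M. -/
universe u

namespace SkewBrace

variable {B : Type u} [SkewBrace B]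

lemma zmul (a : B) : (0 : B) * a = a := by rw [zero_eq_one, one_mul]
lemma mulz (a : B) : a * (0 : B) = a := by rw [zero_eq_one, mul_one]
lemma mul_self_inv_zero (a : B) : a * a⁻¹ = 0 := by rw [mul_inv_cancel, zero_eq_one]
lemma inv_self_mul_zero (a : B) : a⁻¹ * a = 0 := by rw [inv_mul_cancel, zero_eq_one]

/-! ### Subbrace closure -/

lemma isSubbrace_univ : IsSubbrace (Set.univ : Set B) :=
  ⟨trivial, fun _ _ _ _ => trivial, fun _ _ => trivial, fun _ _ _ _ => trivial,
    fun _ _ => trivial⟩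

lemma isSubbrace_subbraceClosure (E : Set B) : IsSubbrace (subbraceClosure E) := by
  constructor
  · exact fun S hS => hS.1.zero_mem
  · exact fun a b ha hb S hS => hS.1.add_mem (ha S hS) (hb S hS)
  · exact fun a ha S hS => hS.1.neg_mem (ha S hS)
  · exact fun a b ha hb S hS => hS.1.mul_mem (ha S hS) (hb S hS)
  · exact fun a ha S hS => hS.1.inv_mem (ha S hS)

lemma subset_subbraceClosure (E : Set B) : E ⊆ subbraceClosure E :=
  fun _ ha S hS => hS.2 ha

lemma subbraceClosure_le {E S : Set B} (hS : IsSubbrace S) (hE : E ⊆ S) :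
    subbraceClosure E ⊆ S :=
  Set.sInter_subset_of_mem ⟨hS, hE⟩

lemma subbraceClosure_mono {E E' : Set B} (h : E ⊆ E') :
    subbraceClosure E ⊆ subbraceClosure E' :=
  subbraceClosure_le (isSubbrace_subbraceClosure E') (h.trans (subset_subbraceClosure E'))

lemma mem_subbraceClosure_finset {E : Set B} {a : B} (h : a ∈ subbraceClosure E) :
    ∃ F : Finset B, ↑F ⊆ E ∧ a ∈ subbraceClosure (↑F : Set B) := by
  classical
  let U : Set B := {x | ∃ F : Finset B, ↑F ⊆ E ∧ x ∈ subbraceClosure (↑F : Set B)}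
  have hU : IsSubbrace U := by
    constructor
    · exact ⟨∅, by simp, (isSubbrace_subbraceClosure _).zero_mem⟩
    · rintro a b ⟨F1, hF1, ha⟩ ⟨F2, hF2, hb⟩
      refine ⟨F1 ∪ F2, by simp [Finset.coe_union, Set.union_subset hF1 hF2], ?_⟩
      exact (isSubbrace_subbraceClosure _).add_mem
        (subbraceClosure_mono (by simp [Finset.coe_union]) ha)
        (subbraceClosure_mono (by simp [Finset.coe_union]) hb)
    · rintro a ⟨F1, hF1, ha⟩
      exact ⟨F1, hF1, (isSubbrace_subbraceClosure _).neg_mem ha⟩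
    · rintro a b ⟨F1, hF1, ha⟩ ⟨F2, hF2, hb⟩
      refine ⟨F1 ∪ F2, by simp [Finset.coe_union, Set.union_subset hF1 hF2], ?_⟩
      exact (isSubbrace_subbraceClosure _).mul_mem
        (subbraceClosure_mono (by simp [Finset.coe_union]) ha)
        (subbraceClosure_mono (by simp [Finset.coe_union]) hb)
    · rintro a ⟨F1, hF1, ha⟩
      exact ⟨F1, hF1, (isSubbrace_subbraceClosure _).inv_mem ha⟩
  have hEU : E ⊆ U := fun x hx =>
    ⟨{x}, by simpa using hx, subset_subbraceClosure _ (by simp)⟩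
  exact subbraceClosure_le hU hEU h

end SkewBrace
namespace SkewBrace

variable {B : Type u} [SkewBrace B]

/-- Congruence modulo an ideal: `a ≡ b` iff `-a + b ∈ J`. -/
def RMod (J : Set B) (a b : B) : Prop := -a + b ∈ J

section Cong

variable {H J : Set B} (hH : IsSubbrace H) (hJ : IsIdealIn H J)
include hJ

lemma rmod_refl (a : B) : RMod J a a := by
  simpa [RMod] using hJ.isSubbrace.zero_mem

lemma rmod_of_eq {a b : B} (h : a = b) : RMod J a b := h ▸ rmod_refl hJ a

lemma rmod_symm {a b : B} (h : RMod J a b) : RMod J b a := by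
  have := hJ.isSubbrace.neg_mem h
  simpa [RMod, neg_add_rev] using this

lemma rmod_trans {a b c : B} (h1 : RMod J a b) (h2 : RMod J b c) : RMod J a c := by
  have := hJ.isSubbrace.add_mem h1 h2
  simpa [RMod, add_assoc] using this

lemma rmod_add_left (c : B) {a b : B} (h : RMod J a b) : RMod J (c + a) (c + b) := by
  simpa [RMod, neg_add_rev, add_assoc] using h

include hH in
lemma rmod_add_right {a b : B} (c : B) (hc : c ∈ H) (h : RMod J a b) :
    RMod J (a + c) (b + c) := by
  have := hJ.add_conj_mem (hH.neg_mem hc) h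
  simpa [RMod, neg_add_rev, add_assoc] using this

include hH in
lemma rmod_neg {a b : B} (ha : a ∈ H) (h : RMod J a b) : RMod J (-a) (-b) := by
  have h' : -b + a ∈ J := rmod_symm hJ h
  have := hJ.add_conj_mem ha h'
  have e : a + (-b + a) + -a = -(-a) + -b := by
    simp [add_assoc, neg_add_rev]
  rwa [e] at this

include hH in
lemma rmod_mul_elem {a i : B} (ha : a ∈ H) (hi : i ∈ J) : RMod J a (a * i) := by
  have h1 : sbStar a i ∈ J := hJ.star_mem_left ha hi
  have := hJ.isSubbrace.add_mem h1 hi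
  simpa [RMod, sbStar, add_assoc] using this

include hH in
lemma rmod_decomp {a b : B} (ha : a ∈ H) (h : RMod J a b) : ∃ i ∈ J, b = a * i := by
  refine ⟨a⁻¹ * b, ?_, by rw [mul_inv_cancel_left]⟩
  have hb : b = a + (-a + b) := by rw [add_neg_cancel_left]
  have hskew : a⁻¹ * (a + (-a + b)) = a⁻¹ * a + (-a⁻¹ + a⁻¹ * (-a + b)) :=
    skew_distrib a⁻¹ a (-a + b)
  have hsz : a⁻¹ * a = 0 := inv_self_mul_zero a
  have h1 : sbStar a⁻¹ (-a + b) ∈ J := hJ.star_mem_left (hH.inv_mem ha) h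
  have h2 : sbStar a⁻¹ (-a + b) + (-a + b) ∈ J := hJ.isSubbrace.add_mem h1 h
  have e : sbStar a⁻¹ (-a + b) + (-a + b) = a⁻¹ * b := by
    rw [sbStar]
    rw [show a⁻¹ * b = a⁻¹ * (a + (-a + b)) by rw [add_neg_cancel_left], hskew, hsz, zero_add]
    simp [add_assoc]
  rwa [e] at h2

include hH in
lemma rmod_mul {a b a' b' : B} (ha : a ∈ H) (hb : b ∈ H)
    (h1 : RMod J a a') (h2 : RMod J b b') : RMod J (a * b) (a' * b') := by
  obtain ⟨i1, hi1, rfl⟩ := rmod_decomp hH hJ ha h1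
  obtain ⟨i2, hi2, rfl⟩ := rmod_decomp hH hJ hb h2
  have hj : b⁻¹ * i1 * (b⁻¹)⁻¹ * i2 ∈ J :=
    hJ.isSubbrace.mul_mem (hJ.mul_conj_mem (hH.inv_mem hb) hi1) hi2
  have := rmod_mul_elem hH hJ (hH.mul_mem ha hb) hj
  have e : a * b * (b⁻¹ * i1 * (b⁻¹)⁻¹ * i2) = a * i1 * (b * i2) := by group
  rwa [e] at this

include hH in
lemma rmod_inv {a b : B} (ha : a ∈ H) (h : RMod J a b) : RMod J a⁻¹ b⁻¹ := by
  obtain ⟨i, hi, rfl⟩ := rmod_decomp hH hJ ha h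
  have hj : a * i⁻¹ * a⁻¹ ∈ J := hJ.mul_conj_mem ha (hJ.isSubbrace.inv_mem hi)
  have := rmod_mul_elem hH hJ (hH.inv_mem ha) hj
  have e : a⁻¹ * (a * i⁻¹ * a⁻¹) = (a * i)⁻¹ := by group
  rwa [e] at this

end Cong

end SkewBrace
namespace SkewBrace

set_option linter.unusedSectionVars false

variable {B : Type u} [SkewBrace B]

/-- `z` is central modulo `J` in `H`. -/
def Cen (H J : Set B) (z : B) : Prop :=
  z ∈ H ∧ ∀ b ∈ H, RMod J (z + b) (b + z) ∧ RMod J (z + b) (z * b) ∧ RMod J (z + b) (b * z)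

section Cen

variable {H J : Set B} (hH : IsSubbrace H) (hJ : IsIdealIn H J)
include hH hJ

lemma cen_zero : Cen H J (0 : B) := by
  refine ⟨hH.zero_mem, fun b hb => ?_⟩
  refine ⟨rmod_of_eq hJ (by rw [zero_add, add_zero]),
    rmod_of_eq hJ (by rw [zero_add, zmul]),
    rmod_of_eq hJ (by rw [zero_add, mulz])⟩

lemma cen_congr {z z' : B} (hz : Cen H J z) (hz' : z' ∈ H) (h : RMod J z z') :
    Cen H J z' := by
  refine ⟨hz', fun b hb => ?_⟩
  obtain ⟨c1, c2, c3⟩ := hz.2 b hb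
  have e1 : RMod J (z' + b) (z + b) := rmod_add_right hH hJ b hb (rmod_symm hJ h)
  refine ⟨rmod_trans hJ e1 (rmod_trans hJ c1 (rmod_add_left hJ b h)), ?_, ?_⟩
  · exact rmod_trans hJ e1 (rmod_trans hJ c2 (rmod_mul hH hJ hz.1 hb h (rmod_refl hJ b)))
  · exact rmod_trans hJ e1 (rmod_trans hJ c3 (rmod_mul hH hJ hb hz.1 (rmod_refl hJ b) h))

lemma cen_comm {z b : B} (hz : Cen H J z) (hb : b ∈ H) : RMod J (z + b) (b + z) :=
  (hz.2 b hb).1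

lemma cen_mull {z b : B} (hz : Cen H J z) (hb : b ∈ H) : RMod J (z * b) (z + b) :=
  rmod_symm hJ (hz.2 b hb).2.1

lemma cen_mulr {z b : B} (hz : Cen H J z) (hb : b ∈ H) : RMod J (b * z) (b + z) :=
  rmod_trans hJ (rmod_symm hJ (hz.2 b hb).2.2) (cen_comm hH hJ hz hb)

lemma rmod_inv_neg {z : B} (hz : Cen H J z) : RMod J z⁻¹ (-z) := by
  have h1 : RMod J (z + z⁻¹) (z * z⁻¹) := (hz.2 z⁻¹ (hH.inv_mem hz.1)).2.1
  rw [mul_self_inv_zero] at h1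
  have : -(z + z⁻¹) + 0 ∈ J := h1
  simpa [RMod, neg_add_rev] using this

lemma cen_neg {z : B} (hz : Cen H J z) : Cen H J (-z) := by
  have hzH := hz.1
  have hnH : -z ∈ H := hH.neg_mem hzH
  have hin : RMod J z⁻¹ (-z) := rmod_inv_neg hH hJ hz
  refine ⟨hnH, fun b hb => ?_⟩
  have hbz : b + -z ∈ H := hH.add_mem hb hnH
  -- (i) additive commute
  have s1 : RMod J (z + (b + -z)) ((b + -z) + z) := cen_comm hH hJ hz hbz
  have e1 : (b + -z) + z = b := by rw [add_assoc, neg_add_cancel, add_zero]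
  rw [e1] at s1
  have s2 : RMod J (-z + (z + (b + -z))) (-z + b) := rmod_add_left hJ (-z) s1
  rw [neg_add_cancel_left] at s2
  have ci : RMod J (-z + b) (b + -z) := rmod_symm hJ s2
  refine ⟨ci, ?_, ?_⟩
  -- (ii) -z + b ≡ (-z) * b
  · have m1 : RMod J ((-z) * b) (z⁻¹ * b) :=
      rmod_mul hH hJ hnH hb (rmod_symm hJ hin) (rmod_refl hJ b)
    have hzib : z⁻¹ * b ∈ H := hH.mul_mem (hH.inv_mem hzH) hb
    have m2 : RMod J (z + z⁻¹ * b) (z * (z⁻¹ * b)) := (hz.2 _ hzib).2.1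
    rw [mul_inv_cancel_left] at m2
    have m3 : RMod J (-z + (z + z⁻¹ * b)) (-z + b) := rmod_add_left hJ (-z) m2
    rw [neg_add_cancel_left] at m3
    exact rmod_symm hJ (rmod_trans hJ m1 m3)
  -- (iii) -z + b ≡ b * (-z)
  · have m1 : RMod J (b * (-z)) (b * z⁻¹) :=
      rmod_mul hH hJ hb hnH (rmod_refl hJ b) (rmod_symm hJ hin)
    have hbzi : b * z⁻¹ ∈ H := hH.mul_mem hb (hH.inv_mem hzH)
    have m2 : RMod J (b * z⁻¹ + z) ((b * z⁻¹) * z) :=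
      rmod_trans hJ (rmod_symm hJ (cen_comm hH hJ hz hbzi)) (hz.2 _ hbzi).2.2
    rw [inv_mul_cancel_right] at m2
    have m3 : RMod J ((b * z⁻¹ + z) + -z) (b + -z) := rmod_add_right hH hJ (-z) hnH m2
    rw [add_neg_cancel_right] at m3
    exact rmod_trans hJ ci (rmod_symm hJ (rmod_trans hJ m1 m3))

lemma cen_inv {z : B} (hz : Cen H J z) : Cen H J z⁻¹ :=
  cen_congr hH hJ (cen_neg hH hJ hz) (hH.inv_mem hz.1)
    (rmod_symm hJ (rmod_inv_neg hH hJ hz))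

lemma cen_add {z1 z2 : B} (h1 : Cen H J z1) (h2 : Cen H J z2) : Cen H J (z1 + z2) := by
  have hz1 := h1.1; have hz2 := h2.1
  have hzz : z1 + z2 ∈ H := hH.add_mem hz1 hz2
  have hcomm : ∀ b ∈ H, RMod J ((z1 + z2) + b) (b + (z1 + z2)) := by
    intro b hb
    have e1 : (z1 + z2) + b = z1 + (z2 + b) := by rw [add_assoc]
    have s1 : RMod J (z1 + (z2 + b)) (z1 + (b + z2)) :=
      rmod_add_left hJ z1 (cen_comm hH hJ h2 hb)
    have e2 : z1 + (b + z2) = (z1 + b) + z2 := by rw [add_assoc]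
    have s2 : RMod J ((z1 + b) + z2) ((b + z1) + z2) :=
      rmod_add_right hH hJ z2 hz2 (cen_comm hH hJ h1 hb)
    have e3 : (b + z1) + z2 = b + (z1 + z2) := by rw [add_assoc]
    rw [e1, ← e3]
    exact rmod_trans hJ s1 (e2 ▸ s2)
  refine ⟨hzz, fun b hb => ?_⟩
  refine ⟨hcomm b hb, ?_, ?_⟩
  · have s1 : RMod J ((z1 + z2) * b) ((z1 * z2) * b) :=
      rmod_mul hH hJ hzz hb ((h1.2 z2 hz2).2.1) (rmod_refl hJ b)
    have e1 : (z1 * z2) * b = z1 * (z2 * b) := by rw [mul_assoc]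
    have s2 : RMod J (z1 * (z2 * b)) (z1 * (z2 + b)) :=
      rmod_mul hH hJ hz1 (hH.mul_mem hz2 hb) (rmod_refl hJ z1) (cen_mull hH hJ h2 hb)
    have s3 : RMod J (z1 * (z2 + b)) (z1 + (z2 + b)) :=
      cen_mull hH hJ h1 (hH.add_mem hz2 hb)
    have e2 : z1 + (z2 + b) = (z1 + z2) + b := by rw [add_assoc]
    exact rmod_symm hJ (rmod_trans hJ (e1 ▸ s1) (rmod_trans hJ s2 (e2 ▸ s3)))
  · have s1 : RMod J (b * (z1 + z2)) (b * (z1 * z2)) :=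
      rmod_mul hH hJ hb hzz (rmod_refl hJ b) ((h1.2 z2 hz2).2.1)
    have e1 : b * (z1 * z2) = (b * z1) * z2 := by rw [mul_assoc]
    have s2 : RMod J ((b * z1) * z2) ((b + z1) * z2) :=
      rmod_mul hH hJ (hH.mul_mem hb hz1) hz2 (cen_mulr hH hJ h1 hb) (rmod_refl hJ z2)
    have s3 : RMod J ((b + z1) * z2) ((b + z1) + z2) :=
      cen_mulr hH hJ h2 (hH.add_mem hb hz1)
    have e3 : (b + z1) + z2 = b + (z1 + z2) := by rw [add_assoc]
    have : RMod J (b * (z1 + z2)) (b + (z1 + z2)) :=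
      rmod_trans hJ s1 (rmod_trans hJ (e1 ▸ s2) (e3 ▸ s3))
    exact rmod_trans hJ (hcomm b hb) (rmod_symm hJ this)

lemma cen_mul {z1 z2 : B} (h1 : Cen H J z1) (h2 : Cen H J z2) : Cen H J (z1 * z2) :=
  cen_congr hH hJ (cen_add hH hJ h1 h2) (hH.mul_mem h1.1 h2.1) ((h1.2 z2 h2.1).2.1)

end Cen

end SkewBrace
namespace SkewBrace

set_option linter.unusedSectionVars false

variable {B : Type u} [SkewBrace B]

section Forms

variable {H J : Set B} (hH : IsSubbrace H) (hJ : IsIdealIn H J)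
include hH hJ

lemma cen_addmul {b z : B} (hb : b ∈ H) (hz : Cen H J z) : RMod J (b + z) (b * z) :=
  rmod_trans hJ (rmod_symm hJ (cen_comm hH hJ hz hb)) ((hz.2 b hb).2.2)

lemma form_neg {p z : B} (hp : p ∈ H) (hz : Cen H J z) :
    RMod J (-(p + z)) (-p + -z) := by
  have : RMod J (-z + -p) (-p + -z) := cen_comm hH hJ (cen_neg hH hJ hz) (hH.neg_mem hp)
  rwa [← neg_add_rev] at this

lemma form_add {p q z z' : B} (hp : p ∈ H) (hq : q ∈ H)
    (hz : Cen H J z) (hz' : Cen H J z') :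
    RMod J ((p + z) + (q + z')) ((p + q) + (z + z')) := by
  have s1 : RMod J ((z + q) + z') ((q + z) + z') :=
    rmod_add_right hH hJ z' hz'.1 (cen_comm hH hJ hz hq)
  have s2 : RMod J (p + ((z + q) + z')) (p + ((q + z) + z')) := rmod_add_left hJ p s1
  have e1 : (p + z) + (q + z') = p + ((z + q) + z') := by simp only [add_assoc]
  have e2 : (p + q) + (z + z') = p + ((q + z) + z') := by simp only [add_assoc]
  rw [e1, e2]; exact s2

lemma form_mul {p q z z' : B} (hp : p ∈ H) (hq : q ∈ H)
    (hz : Cen H J z) (hz' : Cen H J z') :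
    RMod J ((p + z) * (q + z')) ((p * q) + (z + z')) := by
  have hzH := hz.1; have hz'H := hz'.1
  have dp : RMod J (p + z) (p * z) := cen_addmul hH hJ hp hz
  have dq : RMod J (q + z') (q * z') := cen_addmul hH hJ hq hz'
  have s1 : RMod J ((p + z) * (q + z')) ((p * z) * (q * z')) :=
    rmod_mul hH hJ (hH.add_mem hp hzH) (hH.add_mem hq hz'H) dp dq
  have e1 : (p * z) * (q * z') = (p * (z * q)) * z' := by group
  have inner : RMod J (z * q) (q * z) :=
    rmod_trans hJ (cen_mull hH hJ hz hq) ((hz.2 q hq).2.2)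
  have s2 : RMod J ((p * (z * q)) * z') ((p * (q * z)) * z') :=
    rmod_mul hH hJ (hH.mul_mem hp (hH.mul_mem hzH hq)) hz'H
      (rmod_mul hH hJ hp (hH.mul_mem hzH hq) (rmod_refl hJ p) inner) (rmod_refl hJ z')
  have e2 : (p * (q * z)) * z' = (p * q) * (z * z') := by group
  have s3 : RMod J ((p * q) * (z * z')) ((p * q) + (z * z')) :=
    rmod_symm hJ (cen_addmul hH hJ (hH.mul_mem hp hq) (cen_mul hH hJ hz hz'))
  have s4 : RMod J ((p * q) + (z * z')) ((p * q) + (z + z')) :=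
    rmod_add_left hJ _ (cen_mull hH hJ hz hz'.1)
  rw [e1] at s1
  rw [e2] at s2
  exact rmod_trans hJ s1 (rmod_trans hJ s2 (rmod_trans hJ s3 s4))

lemma form_inv {p z : B} (hp : p ∈ H) (hz : Cen H J z) :
    RMod J ((p + z)⁻¹) (p⁻¹ + z⁻¹) := by
  have i1 : RMod J ((p + z)⁻¹) ((p * z)⁻¹) :=
    rmod_inv hH hJ (hH.add_mem hp hz.1) (cen_addmul hH hJ hp hz)
  have e : (p * z)⁻¹ = z⁻¹ * p⁻¹ := mul_inv_rev p z
  have i2 : RMod J (z⁻¹ * p⁻¹) (z⁻¹ + p⁻¹) :=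
    cen_mull hH hJ (cen_inv hH hJ hz) (hH.inv_mem hp)
  have i3 : RMod J (z⁻¹ + p⁻¹) (p⁻¹ + z⁻¹) :=
    cen_comm hH hJ (cen_inv hH hJ hz) (hH.inv_mem hp)
  rw [e] at i1
  exact rmod_trans hJ i1 (rmod_trans hJ i2 i3)

lemma vanish {z1 z2 : B} (hz1 : Cen H J z1) (hz2 : Cen H J z2) :
    RMod J (((-z1 + -z2) + z1) + z2) 0 := by
  have inner : RMod J (-z2 + z1) (z1 + -z2) :=
    rmod_symm hJ (cen_comm hH hJ hz1 (hH.neg_mem hz2.1))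
  have s : RMod J ((-z1 + (-z2 + z1)) + z2) ((-z1 + (z1 + -z2)) + z2) :=
    rmod_add_right hH hJ z2 hz2.1 (rmod_add_left hJ (-z1) inner)
  have e1 : ((-z1 + -z2) + z1) + z2 = (-z1 + (-z2 + z1)) + z2 := by
    simp only [add_assoc]
  have e2 : (-z1 + (z1 + -z2)) + z2 = 0 := by
    rw [neg_add_cancel_left, neg_add_cancel]
  rw [e1]; exact e2 ▸ s

end Forms

end SkewBrace
namespace SkewBrace

set_option linter.unusedSectionVars false

variable {B : Type u} [SkewBrace B]

section Reduce

variable {H J K : Set B} (hH : IsSubbrace H) (hJ : IsIdealIn H J) (hKH : K ⊆ H)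
include hH hJ hKH

variable {a b κ1 z1 κ2 z2 : B}

lemma reduce_add (ha : a ∈ H) (hb : b ∈ H) (hκ1 : κ1 ∈ K) (hz1 : Cen H J z1)
    (hr1 : RMod J a (κ1 + z1)) (hκ2 : κ2 ∈ K) (hz2 : Cen H J z2)
    (hr2 : RMod J b (κ2 + z2)) :
    RMod J (addCommutator a b) (addCommutator κ1 κ2) := by
  have hκ1H := hKH hκ1; have hκ2H := hKH hκ2
  have hz1H := hz1.1; have hz2H := hz2.1
  have na : RMod J (-a) (-κ1 + -z1) :=
    rmod_trans hJ (rmod_neg hH hJ ha hr1) (form_neg hH hJ hκ1H hz1)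
  have nb : RMod J (-b) (-κ2 + -z2) :=
    rmod_trans hJ (rmod_neg hH hJ hb hr2) (form_neg hH hJ hκ2H hz2)
  have t1 : RMod J (-a + -b) ((-κ1 + -κ2) + (-z1 + -z2)) := by
    refine rmod_trans hJ (rmod_trans hJ (rmod_add_right hH hJ (-b) (hH.neg_mem hb) na)
      (rmod_add_left hJ _ nb)) ?_
    exact form_add hH hJ (hH.neg_mem hκ1H) (hH.neg_mem hκ2H)
      (cen_neg hH hJ hz1) (cen_neg hH hJ hz2)
  have t2 : RMod J ((-a + -b) + a)
      (((-κ1 + -κ2) + κ1) + ((-z1 + -z2) + z1)) := by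
    refine rmod_trans hJ (rmod_trans hJ (rmod_add_right hH hJ a ha t1)
      (rmod_add_left hJ _ hr1)) ?_
    exact form_add hH hJ (hH.add_mem (hH.neg_mem hκ1H) (hH.neg_mem hκ2H)) hκ1H
      (cen_add hH hJ (cen_neg hH hJ hz1) (cen_neg hH hJ hz2)) hz1
  have t3 : RMod J (((-a + -b) + a) + b)
      ((((-κ1 + -κ2) + κ1) + κ2) + ((((-z1 + -z2) + z1) + z2))) := by
    refine rmod_trans hJ (rmod_trans hJ (rmod_add_right hH hJ b hb t2)
      (rmod_add_left hJ _ hr2)) ?_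
    exact form_add hH hJ
      (hH.add_mem (hH.add_mem (hH.neg_mem hκ1H) (hH.neg_mem hκ2H)) hκ1H) hκ2H
      (cen_add hH hJ (cen_add hH hJ (cen_neg hH hJ hz1) (cen_neg hH hJ hz2)) hz1) hz2
  have zv : RMod J (((-z1 + -z2) + z1) + z2) 0 := vanish hH hJ hz1 hz2
  have t4 : RMod J ((((-κ1 + -κ2) + κ1) + κ2) + ((((-z1 + -z2) + z1) + z2)))
      ((((-κ1 + -κ2) + κ1) + κ2) + 0) := rmod_add_left hJ _ zv
  simp only [addCommutator]
  exact rmod_trans hJ t3 (rmod_trans hJ t4 (rmod_of_eq hJ (add_zero _)))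

lemma reduce_mul (ha : a ∈ H) (hb : b ∈ H) (hκ1 : κ1 ∈ K) (hz1 : Cen H J z1)
    (hr1 : RMod J a (κ1 + z1)) (hκ2 : κ2 ∈ K) (hz2 : Cen H J z2)
    (hr2 : RMod J b (κ2 + z2)) :
    RMod J (mulCommutator a b) (mulCommutator κ1 κ2) := by
  have hκ1H := hKH hκ1; have hκ2H := hKH hκ2
  have hz1H := hz1.1; have hz2H := hz2.1
  have ia : RMod J a⁻¹ (κ1⁻¹ + z1⁻¹) :=
    rmod_trans hJ (rmod_inv hH hJ ha hr1) (form_inv hH hJ hκ1H hz1)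
  have ib : RMod J b⁻¹ (κ2⁻¹ + z2⁻¹) :=
    rmod_trans hJ (rmod_inv hH hJ hb hr2) (form_inv hH hJ hκ2H hz2)
  have t1 : RMod J (a⁻¹ * b⁻¹) ((κ1⁻¹ * κ2⁻¹) + (z1⁻¹ + z2⁻¹)) := by
    refine rmod_trans hJ (rmod_mul hH hJ (hH.inv_mem ha) (hH.inv_mem hb) ia ib) ?_
    exact form_mul hH hJ (hH.inv_mem hκ1H) (hH.inv_mem hκ2H)
      (cen_inv hH hJ hz1) (cen_inv hH hJ hz2)
  have t2 : RMod J ((a⁻¹ * b⁻¹) * a)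
      (((κ1⁻¹ * κ2⁻¹) * κ1) + ((z1⁻¹ + z2⁻¹) + z1)) := by
    refine rmod_trans hJ (rmod_mul hH hJ (hH.mul_mem (hH.inv_mem ha) (hH.inv_mem hb))
      ha t1 hr1) ?_
    exact form_mul hH hJ (hH.mul_mem (hH.inv_mem hκ1H) (hH.inv_mem hκ2H)) hκ1H
      (cen_add hH hJ (cen_inv hH hJ hz1) (cen_inv hH hJ hz2)) hz1
  have t3 : RMod J (((a⁻¹ * b⁻¹) * a) * b)
      ((((κ1⁻¹ * κ2⁻¹) * κ1) * κ2) + (((z1⁻¹ + z2⁻¹) + z1) + z2)) := by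
    refine rmod_trans hJ (rmod_mul hH hJ
      (hH.mul_mem (hH.mul_mem (hH.inv_mem ha) (hH.inv_mem hb)) ha) hb t2 hr2) ?_
    exact form_mul hH hJ
      (hH.mul_mem (hH.mul_mem (hH.inv_mem hκ1H) (hH.inv_mem hκ2H)) hκ1H) hκ2H
      (cen_add hH hJ (cen_add hH hJ (cen_inv hH hJ hz1) (cen_inv hH hJ hz2)) hz1) hz2
  have zconv : RMod J ((z1⁻¹ + z2⁻¹) + z1) ((-z1 + -z2) + z1) := by
    refine rmod_add_right hH hJ z1 hz1H ?_
    exact rmod_trans hJ (rmod_add_right hH hJ z2⁻¹ (hH.inv_mem hz2H)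
      (rmod_inv_neg hH hJ hz1)) (rmod_add_left hJ (-z1) (rmod_inv_neg hH hJ hz2))
  have zv : RMod J (((z1⁻¹ + z2⁻¹) + z1) + z2) 0 :=
    rmod_trans hJ (rmod_add_right hH hJ z2 hz2H zconv) (vanish hH hJ hz1 hz2)
  have t4 : RMod J ((((κ1⁻¹ * κ2⁻¹) * κ1) * κ2) + (((z1⁻¹ + z2⁻¹) + z1) + z2))
      ((((κ1⁻¹ * κ2⁻¹) * κ1) * κ2) + 0) := rmod_add_left hJ _ zv
  simp only [mulCommutator]
  exact rmod_trans hJ t3 (rmod_trans hJ t4 (rmod_of_eq hJ (add_zero _)))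

lemma reduce_mixed (ha : a ∈ H) (hb : b ∈ H) (hκ1 : κ1 ∈ K) (hz1 : Cen H J z1)
    (hr1 : RMod J a (κ1 + z1)) (hκ2 : κ2 ∈ K) (hz2 : Cen H J z2)
    (hr2 : RMod J b (κ2 + z2)) :
    RMod J (a * b + -(a + b)) (κ1 * κ2 + -(κ1 + κ2)) := by
  have hκ1H := hKH hκ1; have hκ2H := hKH hκ2
  have m1 : RMod J (a * b) ((κ1 * κ2) + (z1 + z2)) :=
    rmod_trans hJ (rmod_mul hH hJ ha hb hr1 hr2) (form_mul hH hJ hκ1H hκ2H hz1 hz2)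
  have m2 : RMod J (a + b) ((κ1 + κ2) + (z1 + z2)) := by
    refine rmod_trans hJ (rmod_trans hJ (rmod_add_right hH hJ b hb hr1)
      (rmod_add_left hJ _ hr2)) ?_
    exact form_add hH hJ hκ1H hκ2H hz1 hz2
  have m3 : RMod J (-(a + b)) ((-(κ1 + κ2)) + (-(z1 + z2))) :=
    rmod_trans hJ (rmod_neg hH hJ (hH.add_mem ha hb) m2)
      (form_neg hH hJ (hH.add_mem hκ1H hκ2H) (cen_add hH hJ hz1 hz2))
  have m4 : RMod J (a * b + -(a + b))
      (((κ1 * κ2) + (z1 + z2)) + ((-(κ1 + κ2)) + (-(z1 + z2)))) :=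
    rmod_trans hJ (rmod_add_right hH hJ _ (hH.neg_mem (hH.add_mem ha hb)) m1)
      (rmod_add_left hJ _ m3)
  have m5 : RMod J (((κ1 * κ2) + (z1 + z2)) + ((-(κ1 + κ2)) + (-(z1 + z2))))
      ((κ1 * κ2 + -(κ1 + κ2)) + ((z1 + z2) + -(z1 + z2))) :=
    form_add hH hJ (hH.mul_mem hκ1H hκ2H) (hH.neg_mem (hH.add_mem hκ1H hκ2H))
      (cen_add hH hJ hz1 hz2) (cen_neg hH hJ (cen_add hH hJ hz1 hz2))
  refine rmod_trans hJ m4 (rmod_trans hJ m5 (rmod_of_eq hJ ?_))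
  rw [add_neg_cancel, add_zero]

end Reduce

end SkewBrace
namespace SkewBrace

set_option linter.unusedSectionVars false

variable {B : Type u} [SkewBrace B]

/-- The set of commutator-type elements of `H`. -/
def DSet (H : Set B) : Set B :=
  {d : B | ∃ a ∈ H, ∃ b ∈ H,
    d = addCommutator a b ∨ d = mulCommutator a b ∨ d = a * b + -(a + b)}

section Level

variable {H J K Zs : Set B} (hH : IsSubbrace H) (hJ : IsIdealIn H J)
  (hK : IsSubbrace K) (hKH : K ⊆ H)
include hH hJ hK hKH

lemma exists_decomp (hZ : ∀ z ∈ Zs, Cen H J z)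
    (hgen : H ⊆ subbraceClosure (K ∪ Zs)) :
    ∀ a ∈ H, ∃ κ ∈ K, ∃ z, Cen H J z ∧ RMod J a (κ + z) := by
  set W : Set B :=
    {w : B | w ∈ H ∧ ∃ κ ∈ K, ∃ z, Cen H J z ∧ RMod J w (κ + z)} with hWdef
  have hW : IsSubbrace W := by
    constructor
    · exact ⟨hH.zero_mem, 0, hK.zero_mem, 0, cen_zero hH hJ,
        rmod_of_eq hJ (add_zero (0 : B)).symm⟩
    · rintro w1 w2 ⟨h1H, κ1, hκ1, z1, hz1, hr1⟩ ⟨h2H, κ2, hκ2, z2, hz2, hr2⟩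
      refine ⟨hH.add_mem h1H h2H, κ1 + κ2, hK.add_mem hκ1 hκ2, z1 + z2,
        cen_add hH hJ hz1 hz2, ?_⟩
      refine rmod_trans hJ (rmod_trans hJ (rmod_add_right hH hJ w2 h2H hr1)
        (rmod_add_left hJ _ hr2)) ?_
      exact form_add hH hJ (hKH hκ1) (hKH hκ2) hz1 hz2
    · rintro w ⟨hwH, κ, hκ, z, hz, hr⟩
      refine ⟨hH.neg_mem hwH, -κ, hK.neg_mem hκ, -z, cen_neg hH hJ hz, ?_⟩
      exact rmod_trans hJ (rmod_neg hH hJ hwH hr) (form_neg hH hJ (hKH hκ) hz)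
    · rintro w1 w2 ⟨h1H, κ1, hκ1, z1, hz1, hr1⟩ ⟨h2H, κ2, hκ2, z2, hz2, hr2⟩
      refine ⟨hH.mul_mem h1H h2H, κ1 * κ2, hK.mul_mem hκ1 hκ2, z1 + z2,
        cen_add hH hJ hz1 hz2, ?_⟩
      exact rmod_trans hJ (rmod_mul hH hJ h1H h2H hr1 hr2)
        (form_mul hH hJ (hKH hκ1) (hKH hκ2) hz1 hz2)
    · rintro w ⟨hwH, κ, hκ, z, hz, hr⟩
      refine ⟨hH.inv_mem hwH, κ⁻¹, hK.inv_mem hκ, z⁻¹, cen_inv hH hJ hz, ?_⟩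
      exact rmod_trans hJ (rmod_inv hH hJ hwH hr) (form_inv hH hJ (hKH hκ) hz)
  have hsub : K ∪ Zs ⊆ W := by
    rintro x (hx | hx)
    · exact ⟨hKH hx, x, hx, 0, cen_zero hH hJ, rmod_of_eq hJ (add_zero x).symm⟩
    · exact ⟨(hZ x hx).1, 0, hK.zero_mem, x, hZ x hx,
        rmod_of_eq hJ (zero_add x).symm⟩
  intro a ha
  exact ((subbraceClosure_le hW hsub) (hgen ha)).2

lemma level (hZ : ∀ z ∈ Zs, Cen H J z)
    (hgen : H ⊆ subbraceClosure (K ∪ Zs)) :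
    DSet H ⊆ subbraceClosure (K ∪ J) := by
  rintro d ⟨a, ha, b, hb, hd⟩
  obtain ⟨κ1, hκ1, z1, hz1, hr1⟩ := exists_decomp hH hJ hK hKH hZ hgen a ha
  obtain ⟨κ2, hκ2, z2, hz2, hr2⟩ := exists_decomp hH hJ hK hKH hZ hgen b hb
  have key : ∃ κ ∈ K, RMod J d κ := by
    rcases hd with rfl | rfl | rfl
    · exact ⟨addCommutator κ1 κ2,
        by unfold addCommutator;
           exact hK.add_mem (hK.add_mem (hK.add_mem (hK.neg_mem hκ1) (hK.neg_mem hκ2)) hκ1) hκ2,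
        reduce_add hH hJ hKH ha hb hκ1 hz1 hr1 hκ2 hz2 hr2⟩
    · exact ⟨mulCommutator κ1 κ2,
        by unfold mulCommutator;
           exact hK.mul_mem (hK.mul_mem (hK.mul_mem (hK.inv_mem hκ1) (hK.inv_mem hκ2)) hκ1) hκ2,
        reduce_mul hH hJ hKH ha hb hκ1 hz1 hr1 hκ2 hz2 hr2⟩
    · exact ⟨κ1 * κ2 + -(κ1 + κ2),
        hK.add_mem (hK.mul_mem hκ1 hκ2) (hK.neg_mem (hK.add_mem hκ1 hκ2)),
        reduce_mixed hH hJ hKH ha hb hκ1 hz1 hr1 hκ2 hz2 hr2⟩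
  obtain ⟨κ, hκ, hr⟩ := key
  have hj : -d + κ ∈ J := hr
  have hdk : d = κ + -(-d + κ) := by
    rw [neg_add_rev, neg_neg, ← add_assoc, add_neg_cancel, zero_add]
  rw [hdk]
  have hsc := isSubbrace_subbraceClosure (K ∪ J)
  exact hsc.add_mem (subset_subbraceClosure _ (Or.inl hκ))
    (hsc.neg_mem (subset_subbraceClosure _ (Or.inr hj)))

end Level

/-- Key lemma: in a centrally nilpotent subbrace, if `K` together with the
commutator-type elements generates `H`, then `K = H`. -/
lemma key_nilpotent {H K : Set B} (hH : IsSubbrace H) {n : ℕ}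
    (hnil : CentrallyNilpotentInOfClassLE H n) (hK : IsSubbrace K) (hKH : K ⊆ H)
    (hgen : H ⊆ subbraceClosure (K ∪ DSet H)) : H ⊆ K := by
  obtain ⟨I, hI0, hIn, hIdeal, -, hCF⟩ := hnil
  have main : ∀ j, j ≤ n → H ⊆ subbraceClosure (K ∪ I (n - j)) := by
    intro j
    induction j with
    | zero =>
      intro _
      rw [Nat.sub_zero, hIn]
      exact fun x hx => subset_subbraceClosure _ (Or.inr hx)
    | succ j ih =>
      intro hj
      have prev := ih (Nat.le_of_succ_le hj)
      set k := n - (j + 1) with hkdef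
      have hk1 : n - j = k + 1 := by omega
      rw [hk1] at prev
      have hkn : k < n := by omega
      have hJideal : IsIdealIn H (I k) := hIdeal k (by omega)
      have hZideal : IsIdealIn H (I (k + 1)) := hIdeal (k + 1) (by omega)
      have hZCen : ∀ z ∈ I (k + 1), Cen H (I k) z := by
        intro z hz
        exact ⟨hZideal.subset hz, fun b hb => hCF k hkn hz hb⟩
      have hlev : DSet H ⊆ subbraceClosure (K ∪ I k) :=
        level hH hJideal hK hKH hZCen prev
      refine fun x hx => ?_
      have := hgen hx
      refine subbraceClosure_le (isSubbrace_subbraceClosure _) ?_ this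
      rintro y (hy | hy)
      · exact subset_subbraceClosure _ (Or.inl hy)
      · exact hlev hy
  have := main n le_rfl
  rw [Nat.sub_self, hI0] at this
  refine fun x hx => ?_
  refine subbraceClosure_le hK ?_ (this hx)
  rintro y (hy | hy)
  · exact hy
  · rw [Set.mem_singleton_iff] at hy; rw [hy]; exact hK.zero_mem

end SkewBrace
namespace SkewBrace

set_option linter.unusedSectionVars false

variable {B : Type u} [SkewBrace B]

lemma comm_mem_of_maximal (hB : LocallyCentrallyNilpotent B) {M : Set B}
    (hM : IsSubbrace M)
    (hmax : ∀ S : Set B, IsSubbrace S → M ⊆ S → S = M ∨ S = Set.univ) :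
    ∀ a b x : B,
      (x = addCommutator a b ∨ x = mulCommutator a b ∨ x = a * b + -(a + b)) →
      x ∈ M := by
  intro a b x hx
  rcases hmax (subbraceClosure (M ∪ {x})) (isSubbrace_subbraceClosure _)
      (Set.Subset.trans Set.subset_union_left (subset_subbraceClosure _)) with hEq | hUniv
  · rw [← hEq]
    exact subset_subbraceClosure _ (Or.inr rfl)
  · classical
    have ha : a ∈ subbraceClosure (M ∪ {x}) := by rw [hUniv]; trivial
    have hb : b ∈ subbraceClosure (M ∪ {x}) := by rw [hUniv]; trivial
    obtain ⟨Fa, hFa, haF⟩ := mem_subbraceClosure_finset ha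
    obtain ⟨Fb, hFb, hbF⟩ := mem_subbraceClosure_finset hb
    set F : Finset B := Fa ∪ Fb with hFdef
    have hFMx : (↑F : Set B) ⊆ M ∪ {x} := by
      rw [hFdef, Finset.coe_union]
      exact Set.union_subset hFa hFb
    have haF' : a ∈ subbraceClosure (↑F : Set B) :=
      subbraceClosure_mono (by rw [hFdef, Finset.coe_union]; exact Set.subset_union_left) haF
    have hbF' : b ∈ subbraceClosure (↑F : Set B) :=
      subbraceClosure_mono (by rw [hFdef, Finset.coe_union]; exact Set.subset_union_right) hbF
    set G : Finset B := insert a (insert b F) with hGdef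
    set H := subbraceClosure (↑G : Set B) with hHdef
    have hHsub : IsSubbrace H := isSubbrace_subbraceClosure _
    obtain ⟨n, hnil⟩ := hB G
    set K := subbraceClosure ((↑F : Set B) ∩ M) with hKdef
    have hK : IsSubbrace K := isSubbrace_subbraceClosure _
    have hKM : K ⊆ M := subbraceClosure_le hM Set.inter_subset_right
    have hGH : (↑G : Set B) ⊆ H := subset_subbraceClosure _
    have hFG : (↑F : Set B) ⊆ (↑G : Set B) := by
      intro y hy; rw [hGdef]; push_cast; simp only [Set.mem_insert_iff]
      exact Or.inr (Or.inr hy)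
    have hKH : K ⊆ H :=
      subbraceClosure_le hHsub (Set.Subset.trans Set.inter_subset_left
        (Set.Subset.trans hFG hGH))
    have haH : a ∈ H := hGH (by rw [hGdef]; push_cast; simp)
    have hbH : b ∈ H := hGH (by rw [hGdef]; push_cast; simp)
    have hxH : x ∈ H := by
      rcases hx with rfl | rfl | rfl
      · exact hHsub.add_mem (hHsub.add_mem (hHsub.add_mem (hHsub.neg_mem haH)
          (hHsub.neg_mem hbH)) haH) hbH
      · exact hHsub.mul_mem (hHsub.mul_mem (hHsub.mul_mem (hHsub.inv_mem haH)
          (hHsub.inv_mem hbH)) haH) hbH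
      · exact hHsub.add_mem (hHsub.mul_mem haH hbH)
          (hHsub.neg_mem (hHsub.add_mem haH hbH))
    have hxD : x ∈ DSet H := ⟨a, haH, b, hbH, hx⟩
    have hFsub : (↑F : Set B) ⊆ subbraceClosure (K ∪ DSet H) := by
      intro y hy
      rcases hFMx hy with hyM | hyx
      · exact subset_subbraceClosure _
          (Or.inl (subset_subbraceClosure _ ⟨hy, hyM⟩))
      · rw [Set.mem_singleton_iff] at hyx
        rw [hyx]
        exact subset_subbraceClosure _ (Or.inr hxD)
    have habsub : a ∈ subbraceClosure (K ∪ DSet H) ∧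
        b ∈ subbraceClosure (K ∪ DSet H) := by
      constructor
      · exact subbraceClosure_le (isSubbrace_subbraceClosure _) hFsub haF'
      · exact subbraceClosure_le (isSubbrace_subbraceClosure _) hFsub hbF'
    have hgen : H ⊆ subbraceClosure (K ∪ DSet H) := by
      refine subbraceClosure_le (isSubbrace_subbraceClosure _) ?_
      intro y hy
      rw [hGdef] at hy; push_cast at hy
      rcases hy with rfl | rfl | hy
      · exact habsub.1
      · exact habsub.2
      · exact hFsub hy
    have hHK : H ⊆ K := key_nilpotent hHsub hnil hK hKH hgen
    exact hKM (hHK hxH)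

end SkewBrace
open SkewBrace

/-- In a locally centrally-nilpotent brace, every maximal subbrace is an
ideal and contains the derived ideal `∂(B) = [B,B]^B`. -/
theorem maximal_subbrace_isIdeal {B : Type u} [SkewBrace B]
    (hB : LocallyCentrallyNilpotent B) (M : Set B) (hM : IsSubbrace M)
    (hMne : M ≠ Set.univ)
    (hmax : ∀ S : Set B, IsSubbrace S → M ⊆ S → S = M ∨ S = Set.univ) :
    IsIdeal M ∧ commIdeal (Set.univ : Set B) (Set.univ : Set B) ⊆ M := by
  have hcomm := comm_mem_of_maximal hB hM hmax
  have hadd : ∀ a b : B, addCommutator a b ∈ M :=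
    fun a b => hcomm a b _ (Or.inl rfl)
  have hmul : ∀ a b : B, mulCommutator a b ∈ M :=
    fun a b => hcomm a b _ (Or.inr (Or.inl rfl))
  have hmix : ∀ a b : B, a * b + -(a + b) ∈ M :=
    fun a b => hcomm a b _ (Or.inr (Or.inr rfl))
  have conj_add : ∀ (c : B) {m : B}, m ∈ M → c + m + -c ∈ M := by
    intro c m hm
    have e : c + m + -c = m + addCommutator m (-c) := by
      simp [SkewBrace.addCommutator, add_assoc, neg_neg]
    rw [e]
    exact hM.add_mem hm (hadd m (-c))
  have conj_mul : ∀ (c : B) {m : B}, m ∈ M → c * m * c⁻¹ ∈ M := by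
    intro c m hm
    have e : c * m * c⁻¹ = m * mulCommutator m c⁻¹ := by
      simp only [mulCommutator]; group
    rw [e]
    exact hM.mul_mem hm (hmul m c⁻¹)
  have star_left : ∀ (c : B) {m : B}, m ∈ M → sbStar c m ∈ M := by
    intro c m hm
    have e : sbStar c m = -c + (c * m + -(c + m)) + -(-c) := by
      simp [sbStar, add_assoc, neg_add_rev]
    rw [e]
    exact conj_add (-c) (hmix c m)
  have star_right : ∀ {m : B}, m ∈ M → ∀ (c : B), sbStar m c ∈ M := by
    intro m hm c
    have e : sbStar m c = -m + (m * c + -(m + c)) + -(-m) := by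
      simp [sbStar, add_assoc, neg_add_rev]
    rw [e]
    exact conj_add (-m) (hmix m c)
  have hIdeal : IsIdeal M := by
    refine ⟨Set.subset_univ M, hM, ?_, ?_, ?_, ?_⟩
    · exact fun c _ m hm => conj_add c hm
    · exact fun c _ m hm => conj_mul c hm
    · exact fun c _ m hm => star_left c hm
    · exact fun m hm c _ => star_right hm c
  refine ⟨hIdeal, ?_⟩
  have hcs : commSet (Set.univ : Set B) (Set.univ : Set B) ⊆ M := by
    let Ma : AddSubgroup B :=
      { carrier := M
        add_mem' := fun ha hb => hM.add_mem ha hb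
        zero_mem' := hM.zero_mem
        neg_mem' := fun ha => hM.neg_mem ha }
    let Mm : Subgroup B :=
      { carrier := M
        mul_mem' := fun ha hb => hM.mul_mem ha hb
        one_mem' := by rw [← zero_eq_one]; exact hM.zero_mem
        inv_mem' := fun ha => hM.inv_mem ha }
    have h1 : (AddSubgroup.closure
        {x : B | ∃ i ∈ (Set.univ : Set B), ∃ j ∈ (Set.univ : Set B),
          x = addCommutator i j} : Set B) ⊆ M := by
      have : AddSubgroup.closure
          {x : B | ∃ i ∈ (Set.univ : Set B), ∃ j ∈ (Set.univ : Set B),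
            x = addCommutator i j} ≤ Ma := by
        rw [AddSubgroup.closure_le]
        rintro x ⟨i, -, j, -, rfl⟩
        exact hadd i j
      exact this
    have h2 : (Subgroup.closure
        {x : B | ∃ i ∈ (Set.univ : Set B), ∃ j ∈ (Set.univ : Set B),
          x = mulCommutator i j} : Set B) ⊆ M := by
      have : Subgroup.closure
          {x : B | ∃ i ∈ (Set.univ : Set B), ∃ j ∈ (Set.univ : Set B),
            x = mulCommutator i j} ≤ Mm := by
        rw [Subgroup.closure_le]
        rintro x ⟨i, -, j, -, rfl⟩
        exact hmul i j
      exact this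
    have h3 : {x : B | ∃ i ∈ (Set.univ : Set B), ∃ j ∈ (Set.univ : Set B),
        x = i * j + -(i + j)} ⊆ M := by
      rintro x ⟨i, -, j, -, rfl⟩
      exact hmix i j
    rintro x ((hx | hx) | hx)
    · exact h1 hx
    · exact h2 hx
    · exact h3 hx
  exact Set.sInter_subset_of_mem ⟨hIdeal, hcs⟩
end
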